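/- arXiv:1706.02653 — 4 statements merged into one kernel-verified Lean document; each statement's English description precedes it below -/
import Mathlib

section
/- Let T be a real X×Y matrix and d a positive integer. Then the supremum of |∑_{x,y,m} T_{x,y} a(x,m) b(y,m)| over all real families (a(x,m))_{x∈X, m∈[d]} with ∑_{m=1}^d |a(x,m)| ≤ 1 for each x and (b(y,m)) with |b(y,m)| ≤ 1 for all y,m, equals the supremum of |∑_{x,y} T_{x,y} ã(x) b̃(y, m(x))| over all choices of signs ã(x) ∈ {−1,1}, b̃(y,m) ∈ {−1,1} and functions m: X → [d]. -/
open Finset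

/-- The supremum defining the one-way classical value (with `d` possible
messages) of the XOR game with coefficient matrix `T`, optimizing over general
families `a` with `∑_m |a(x,m)| ≤ 1` and `b` with `|b(y,m)| ≤ 1`, equals the
supremum over deterministic strategies: signs `ã(x), b̃(y,m) ∈ {−1,1}` and
message functions `m : X → [d]`. -/
theorem one_way_classical_value_eq_deterministic
    {X Y : Type*} [Fintype X] [Fintype Y] (T : X → Y → ℝ) (d : ℕ) :
    sSup {r : ℝ | ∃ (a : X → Fin d → ℝ) (b : Y → Fin d → ℝ),
        (∀ x, ∑ m, |a x m| ≤ 1) ∧ (∀ y m, |b y m| ≤ 1) ∧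
        r = |∑ x, ∑ y, ∑ m, T x y * a x m * b y m|} =
    sSup {r : ℝ | ∃ (ta : X → ℝ) (tb : Y → Fin d → ℝ) (msg : X → Fin d),
        (∀ x, ta x = 1 ∨ ta x = -1) ∧ (∀ y m, tb y m = 1 ∨ tb y m = -1) ∧
        r = |∑ x, ∑ y, T x y * ta x * tb y (msg x)|} := by
  classical
  set S1 : Set ℝ := {r : ℝ | ∃ (a : X → Fin d → ℝ) (b : Y → Fin d → ℝ),
        (∀ x, ∑ m, |a x m| ≤ 1) ∧ (∀ y m, |b y m| ≤ 1) ∧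
        r = |∑ x, ∑ y, ∑ m, T x y * a x m * b y m|} with hS1
  set S2 : Set ℝ := {r : ℝ | ∃ (ta : X → ℝ) (tb : Y → Fin d → ℝ) (msg : X → Fin d),
        (∀ x, ta x = 1 ∨ ta x = -1) ∧ (∀ y m, tb y m = 1 ∨ tb y m = -1) ∧
        r = |∑ x, ∑ y, T x y * ta x * tb y (msg x)|} with hS2
  rcases Nat.eq_zero_or_pos d with hd | hd
  · subst hd
    have h1 : S1 = {0} := by
      ext r
      simp only [hS1, Set.mem_setOf_eq, Set.mem_singleton_iff]
      constructor
      · rintro ⟨a, b, -, -, rfl⟩; simp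
      · rintro rfl
        exact ⟨fun _ m => m.elim0, fun _ m => m.elim0, fun x => by simp,
          fun y m => m.elim0, by simp⟩
    rcases isEmpty_or_nonempty X with hX | hX
    · have h2 : S2 = {0} := by
        ext r
        simp only [hS2, Set.mem_setOf_eq, Set.mem_singleton_iff]
        constructor
        · rintro ⟨ta, tb, msg, -, -, rfl⟩; simp
        · rintro rfl
          exact ⟨fun _ => 1, fun _ m => m.elim0, fun x => (IsEmpty.false x).elim,
            fun x => Or.inl rfl, fun y m => m.elim0, by simp⟩
      rw [h1, h2]
    · have h2 : S2 = ∅ := by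
        ext r
        simp only [hS2, Set.mem_setOf_eq, Set.mem_empty_iff_false, iff_false]
        rintro ⟨ta, tb, msg, -⟩
        exact (msg (Classical.arbitrary X)).elim0
      rw [h1, h2, Real.sSup_empty, csSup_singleton]
  · haveI : Nonempty (Fin d) := ⟨⟨0, hd⟩⟩
    have hbdd1 : ∀ r ∈ S1, r ≤ ∑ x, ∑ y, |T x y| := by
      rintro r ⟨a, b, ha, hb, rfl⟩
      calc |∑ x, ∑ y, ∑ m, T x y * a x m * b y m|
          ≤ ∑ x, |∑ y, ∑ m, T x y * a x m * b y m| := Finset.abs_sum_le_sum_abs _ _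
        _ ≤ ∑ x, ∑ y, |∑ m, T x y * a x m * b y m| :=
            sum_le_sum fun x _ => Finset.abs_sum_le_sum_abs _ _
        _ ≤ ∑ x, ∑ y, |T x y| := by
            apply sum_le_sum; intro x _; apply sum_le_sum; intro y _
            calc |∑ m, T x y * a x m * b y m| ≤ ∑ m, |T x y * a x m * b y m| :=
                Finset.abs_sum_le_sum_abs _ _
              _ = ∑ m, |T x y| * (|a x m| * |b y m|) := by simp [abs_mul, mul_assoc]
              _ ≤ ∑ m, |T x y| * (|a x m| * 1) := by
                  apply sum_le_sum; intro m _
                  exact mul_le_mul_of_nonneg_left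
                    (mul_le_mul_of_nonneg_left (hb y m) (abs_nonneg _)) (abs_nonneg _)
              _ = |T x y| * ∑ m, |a x m| := by rw [← mul_sum]; simp
              _ ≤ |T x y| * 1 := mul_le_mul_of_nonneg_left (ha x) (abs_nonneg _)
              _ = |T x y| := mul_one _
    have hbdd2 : ∀ r ∈ S2, r ≤ ∑ x, ∑ y, |T x y| := by
      rintro r ⟨ta, tb, msg, hta, htb, rfl⟩
      have hta1 : ∀ x, |ta x| = 1 := fun x => by rcases hta x with h | h <;> simp [h]
      have htb1 : ∀ y m, |tb y m| = 1 := fun y m => by rcases htb y m with h | h <;> simp [h]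
      calc |∑ x, ∑ y, T x y * ta x * tb y (msg x)|
          ≤ ∑ x, |∑ y, T x y * ta x * tb y (msg x)| := Finset.abs_sum_le_sum_abs _ _
        _ ≤ ∑ x, ∑ y, |T x y * ta x * tb y (msg x)| :=
            sum_le_sum fun x _ => Finset.abs_sum_le_sum_abs _ _
        _ = ∑ x, ∑ y, |T x y| := by
            apply sum_congr rfl; intro x _; apply sum_congr rfl; intro y _
            simp [abs_mul, hta1, htb1]
    have hne2 : S2.Nonempty :=
      ⟨_, fun _ => (1 : ℝ), fun _ _ => (1 : ℝ), fun _ => Classical.arbitrary _,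
        fun _ => Or.inl rfl, fun _ _ => Or.inl rfl, rfl⟩
    have hne1 : S1.Nonempty :=
      ⟨_, fun _ _ => (0 : ℝ), fun _ _ => (0 : ℝ), fun x => by simp, fun y m => by simp, rfl⟩
    apply le_antisymm
    · apply csSup_le hne1
      rintro r ⟨a, b, ha, hb, rfl⟩
      set c : X → Fin d → ℝ := fun x m => ∑ y, T x y * b y m with hc
      have hmax : ∀ x : X, ∃ m : Fin d, ∀ m', |c x m'| ≤ |c x m| := by
        intro x
        obtain ⟨m, -, hm⟩ := Finset.exists_max_image (univ : Finset (Fin d))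
          (fun m => |c x m|) univ_nonempty
        exact ⟨m, fun m' => hm m' (mem_univ _)⟩
      choose msg hmsg using hmax
      set ta : X → ℝ := fun x => if 0 ≤ c x (msg x) then 1 else -1 with hta
      have hta1 : ∀ x, ta x = 1 ∨ ta x = -1 := fun x => by
        by_cases h : 0 ≤ c x (msg x) <;> simp [hta, h]
      have htac : ∀ x, ta x * c x (msg x) = |c x (msg x)| := by
        intro x
        by_cases h : 0 ≤ c x (msg x)
        · simp [hta, h, abs_of_nonneg h]
        · simp [hta, h, abs_of_neg (lt_of_not_ge h)]
      set e : Y → Fin d → ℝ := fun y m => ∑ x, if msg x = m then T x y * ta x else 0 with he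
      set tb : Y → Fin d → ℝ := fun y m => if 0 ≤ e y m then 1 else -1 with htb
      have htb1 : ∀ y m, tb y m = 1 ∨ tb y m = -1 := fun y m => by
        by_cases h : 0 ≤ e y m <;> simp [htb, h]
      have htbe : ∀ y m, e y m * tb y m = |e y m| := by
        intro y m
        by_cases h : 0 ≤ e y m
        · simp [htb, h, abs_of_nonneg h]
        · simp [htb, h, abs_of_neg (lt_of_not_ge h)]
      have key : ∀ f : Y → Fin d → ℝ,
          ∑ x, ∑ y, T x y * ta x * f y (msg x) = ∑ y, ∑ m, e y m * f y m := by
        intro f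
        rw [Finset.sum_comm]
        apply sum_congr rfl; intro y _
        calc ∑ x, T x y * ta x * f y (msg x)
            = ∑ x, ∑ m, (if msg x = m then T x y * ta x else 0) * f y m := by
              apply sum_congr rfl; intro x _
              symm
              simp only [ite_mul, zero_mul]
              rw [Finset.sum_ite_eq (univ : Finset (Fin d)) (msg x)
                (fun m => T x y * ta x * f y m)]
              simp
          _ = ∑ m, ∑ x, (if msg x = m then T x y * ta x else 0) * f y m := Finset.sum_comm
          _ = ∑ m, e y m * f y m := by
              apply sum_congr rfl; intro m _
              rw [he, Finset.sum_mul]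
      have step0 : ∑ x, ∑ y, ∑ m, T x y * a x m * b y m = ∑ x, ∑ m, a x m * c x m := by
        apply sum_congr rfl; intro x _
        rw [Finset.sum_comm]
        apply sum_congr rfl; intro m _
        simp only [hc, Finset.mul_sum]
        apply sum_congr rfl; intros; ring
      have step1 : |∑ x, ∑ m, a x m * c x m| ≤ ∑ x, |c x (msg x)| := by
        calc |∑ x, ∑ m, a x m * c x m| ≤ ∑ x, |∑ m, a x m * c x m| :=
            Finset.abs_sum_le_sum_abs _ _
          _ ≤ ∑ x, |c x (msg x)| := by
              apply sum_le_sum; intro x _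
              calc |∑ m, a x m * c x m| ≤ ∑ m, |a x m * c x m| :=
                  Finset.abs_sum_le_sum_abs _ _
                _ = ∑ m, |a x m| * |c x m| := by simp [abs_mul]
                _ ≤ ∑ m, |a x m| * |c x (msg x)| :=
                    sum_le_sum fun m _ => mul_le_mul_of_nonneg_left (hmsg x m) (abs_nonneg _)
                _ = (∑ m, |a x m|) * |c x (msg x)| := (Finset.sum_mul _ _ _).symm
                _ ≤ 1 * |c x (msg x)| := mul_le_mul_of_nonneg_right (ha x) (abs_nonneg _)
                _ = |c x (msg x)| := one_mul _
      have step2 : ∑ x, |c x (msg x)| = ∑ y, ∑ m, e y m * b y m := by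
        rw [← key b]
        apply sum_congr rfl; intro x _
        rw [← htac x]
        simp only [hc, Finset.mul_sum]
        apply sum_congr rfl; intros; ring
      have step3 : ∑ y, ∑ m, e y m * b y m ≤ ∑ y, ∑ m, |e y m| := by
        apply sum_le_sum; intro y _; apply sum_le_sum; intro m _
        calc e y m * b y m ≤ |e y m * b y m| := le_abs_self _
          _ = |e y m| * |b y m| := abs_mul _ _
          _ ≤ |e y m| * 1 := mul_le_mul_of_nonneg_left (hb y m) (abs_nonneg _)
          _ = |e y m| := mul_one _
      have step4 : ∑ y, ∑ m, |e y m| = ∑ x, ∑ y, T x y * ta x * tb y (msg x) := by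
        rw [key tb]
        apply sum_congr rfl; intro y _
        apply sum_congr rfl; intro m _
        exact (htbe y m).symm
      have hD0 : 0 ≤ ∑ x, ∑ y, T x y * ta x * tb y (msg x) := by
        rw [← step4]
        exact sum_nonneg fun y _ => sum_nonneg fun m _ => abs_nonneg _
      have hmem : |∑ x, ∑ y, T x y * ta x * tb y (msg x)| ∈ S2 :=
        ⟨ta, tb, msg, hta1, htb1, rfl⟩
      calc |∑ x, ∑ y, ∑ m, T x y * a x m * b y m|
          ≤ ∑ x, ∑ y, T x y * ta x * tb y (msg x) := by
            rw [step0]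
            exact step1.trans (by rw [step2, ← step4]; exact step3)
        _ = |∑ x, ∑ y, T x y * ta x * tb y (msg x)| := (abs_of_nonneg hD0).symm
        _ ≤ sSup S2 := le_csSup ⟨_, hbdd2⟩ hmem
    · apply csSup_le hne2
      rintro r ⟨ta, tb, msg, hta, htb, rfl⟩
      apply le_csSup ⟨_, hbdd1⟩
      refine ⟨fun x m => if m = msg x then ta x else 0, tb, ?_, fun y m => ?_, ?_⟩
      · intro x
        have : ∀ m : Fin d, |if m = msg x then ta x else 0| =
            if m = msg x then |ta x| else 0 := by
          intro m; by_cases h : m = msg x <;> simp [h]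
        rw [show (∑ m, |if m = msg x then ta x else 0|) = |ta x| by
          simp only [this]
          rw [Finset.sum_ite_eq' (univ : Finset (Fin d)) (msg x) fun _ => |ta x|]
          simp]
        rcases hta x with h | h <;> simp [h]
      · rcases htb y m with h | h <;> simp [h]
      · congr 1
        apply sum_congr rfl; intro x _
        apply sum_congr rfl; intro y _
        rw [show (∑ m, T x y * (if m = msg x then ta x else 0) * tb y m)
            = ∑ m, if m = msg x then T x y * ta x * tb y m else 0 by
          apply sum_congr rfl; intro m _
          by_cases h : m = msg x <;> simp [h]]
        rw [Finset.sum_ite_eq' (univ : Finset (Fin d)) (msg x)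
          (fun m => T x y * ta x * tb y m)]
        simp
end

section
/- Let G be a XOR game with real coefficients (T_{x,y})_{x∈X,y∈Y} satisfying ∑_{x,y}|T_{x,y}| = 1, and n a positive integer. Then ω*_{o.w.-log n}(G) ≤ √n · ω*(G), where ω*_{o.w.-log n}(G) = sup |∑_{x,y} T_{x,y} tr(R_x B_y)| over self-adjoint n×n matrices with ‖R_x‖_{S_1} ≤ 1, ‖B_y‖_{op} ≤ 1, and ω*(G) = sup |∑_{x,y} T_{x,y} ⟨u_x, v_y⟩| over unit vectors u_x, v_y in a real Hilbert space. -/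
open scoped ComplexOrder

/-- The positive semidefinite square root of a positive semidefinite matrix
(the definition of `Matrix.PosSemidef.sqrt` in the older Mathlib). -/
noncomputable def Matrix.PosSemidef.sqrt {n : Type*} [Fintype n] [DecidableEq n]
    {A : Matrix n n ℂ} (hA : A.PosSemidef) : Matrix n n ℂ :=
  (hA.1.eigenvectorUnitary : Matrix n n ℂ) *
    Matrix.diagonal (fun i => ((Real.sqrt (hA.1.eigenvalues i) : ℝ) : ℂ)) *
    (star hA.1.eigenvectorUnitary : Matrix n n ℂ)

/-- The trace norm (Schatten 1-norm) of a complex square matrix. -/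
noncomputable def traceNorm {n : ℕ} (A : Matrix (Fin n) (Fin n) ℂ) : ℝ :=
  ((Matrix.posSemidef_conjTranspose_mul_self A).sqrt.trace).re

/-- The operator (spectral) norm of a complex square matrix. -/
noncomputable def opNorm {n : ℕ} (A : Matrix (Fin n) (Fin n) ℂ) : ℝ :=
  ‖(Matrix.toEuclideanLin A).toContinuousLinearMap‖

/-!
Flatten an `n × n` matrix `A` to the vector `A.vec`, so that `⟪R.vec, B.vec⟫ = tr (Rᴴ B)`. For
self-adjoint `R` and `B` the number `tr (R B)` is real, hence equals the real inner product of the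
flattened matrices. The Hilbert–Schmidt norm `‖A.vec‖` is at most the trace norm (the sum of the
singular values dominates their `ℓ²` norm) and at most `√n` times the operator norm (each of the
`n` columns has norm at most `‖A‖_op`). So the flattened `R_x` and `B_y / √n` form a feasible
vector strategy, and the bias only drops by the factor `√n`.
-/

open scoped InnerProductSpace Matrix

namespace Matrix

variable {m n : Type*} [Fintype m] [Fintype n]

theorem PosSemidef.re_trace_sqrt [DecidableEq n] {A : Matrix n n ℂ} (hA : A.PosSemidef) :
    hA.sqrt.trace.re = ∑ i, √(hA.1.eigenvalues i) := by
  rw [PosSemidef.sqrt, trace_mul_cycle, Unitary.star_mul_self_of_mem hA.1.eigenvectorUnitary.2,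
    Matrix.one_mul, trace_diagonal, Complex.re_sum]
  simp only [Complex.ofReal_re]

theorem PosSemidef.re_trace_le_sq_re_trace_sqrt [DecidableEq n] {A : Matrix n n ℂ}
    (hA : A.PosSemidef) : A.trace.re ≤ hA.sqrt.trace.re ^ 2 := by
  rw [hA.1.trace_eq_sum_eigenvalues, hA.re_trace_sqrt, Complex.re_sum]
  simp only [Complex.coe_algebraMap, Complex.ofReal_re]
  calc ∑ i, hA.1.eigenvalues i = ∑ i, √(hA.1.eigenvalues i) ^ 2 :=
        Finset.sum_congr rfl fun i _ => (Real.sq_sqrt (hA.eigenvalues_nonneg i)).symm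
    _ ≤ (∑ i, √(hA.1.eigenvalues i)) ^ 2 :=
        Finset.sum_sq_le_sq_sum_of_nonneg fun i _ => Real.sqrt_nonneg _

theorem inner_toLp_vec {𝕜 : Type*} [RCLike 𝕜] (A B : Matrix m n 𝕜) :
    ⟪WithLp.toLp 2 A.vec, WithLp.toLp 2 B.vec⟫_𝕜 = (Aᴴ * B).trace := by
  rw [EuclideanSpace.inner_toLp_toLp, dotProduct_comm, star_vec_dotProduct_vec]

theorem norm_toLp_vec_sq {𝕜 : Type*} [RCLike 𝕜] (A : Matrix m n 𝕜) :
    ‖WithLp.toLp 2 A.vec‖ ^ 2 = RCLike.re (Aᴴ * A).trace := by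
  rw [← inner_toLp_vec, norm_sq_eq_re_inner (𝕜 := 𝕜)]

theorem IsHermitian.trace_mul_eq_real_inner {R B : Matrix n n ℂ} (hR : R.IsHermitian)
    (hB : B.IsHermitian) :
    (R * B).trace = (⟪WithLp.toLp 2 R.vec, WithLp.toLp 2 B.vec⟫_ℝ : ℂ) := by
  have hreal : star (R * B).trace = (R * B).trace := by
    rw [← trace_conjTranspose, conjTranspose_mul, hR.eq, hB.eq, trace_mul_comm]
  have hinner : ⟪WithLp.toLp 2 R.vec, WithLp.toLp 2 B.vec⟫_ℝ = (R * B).trace.re := by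
    -- `⟪·, ·⟫_ℝ` on `EuclideanSpace ℂ _` is the sum of the componentwise `re (conj z * w)`
    rw [← congrArg (fun M => (M * B).trace) hR.eq, ← inner_toLp_vec, PiLp.inner_apply,
      PiLp.inner_apply, Complex.re_sum]
    rfl
  rw [hinner]
  exact (Complex.conj_eq_iff_re.mp hreal).symm

end Matrix

theorem sum_norm_sq_apply_le_opNorm_sq {n : ℕ} (A : Matrix (Fin n) (Fin n) ℂ) (j : Fin n) :
    ∑ i, ‖A i j‖ ^ 2 ≤ opNorm A ^ 2 := by
  rw [opNorm]
  have hcol := (Matrix.toEuclideanLin A).toContinuousLinearMap.le_opNorm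
    (EuclideanSpace.single j 1)
  have hAj : (Matrix.toEuclideanLin A).toContinuousLinearMap (EuclideanSpace.single j 1) =
      WithLp.toLp 2 (A.col j) := by
    simp only [LinearMap.coe_toContinuousLinearMap', Matrix.toLpLin_apply, PiLp.ofLp_single,
      Matrix.mulVec_single, MulOpposite.op_one, one_smul]
  rw [hAj, PiLp.norm_single, norm_one, mul_one] at hcol
  simpa only [EuclideanSpace.norm_sq_eq, Matrix.col_apply] using
    pow_le_pow_left₀ (norm_nonneg _) hcol 2

theorem norm_toLp_vec_le_sqrt_mul_opNorm {n : ℕ} (A : Matrix (Fin n) (Fin n) ℂ) :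
    ‖WithLp.toLp 2 A.vec‖ ≤ √n * opNorm A := by
  have hsq : ‖WithLp.toLp 2 A.vec‖ ^ 2 ≤ (√n * opNorm A) ^ 2 := by
    rw [mul_pow, Real.sq_sqrt n.cast_nonneg, EuclideanSpace.norm_sq_eq, Fintype.sum_prod_type]
    calc ∑ j, ∑ i, ‖A i j‖ ^ 2 ≤ ∑ _j : Fin n, opNorm A ^ 2 :=
          Finset.sum_le_sum fun j _ => sum_norm_sq_apply_le_opNorm_sq A j
      _ = n * opNorm A ^ 2 := by simp
  exact (pow_le_pow_iff_left₀ (norm_nonneg _)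
    (mul_nonneg (Real.sqrt_nonneg _) (norm_nonneg _)) two_ne_zero).mp hsq

theorem norm_toLp_vec_le_traceNorm {n : ℕ} (A : Matrix (Fin n) (Fin n) ℂ) :
    ‖WithLp.toLp 2 A.vec‖ ≤ traceNorm A := by
  have hAA := Matrix.posSemidef_conjTranspose_mul_self A
  have hsq : ‖WithLp.toLp 2 A.vec‖ ^ 2 ≤ traceNorm A ^ 2 := by
    rw [Matrix.norm_toLp_vec_sq]
    exact hAA.re_trace_le_sq_re_trace_sqrt
  have hnonneg : 0 ≤ traceNorm A := by
    rw [traceNorm, hAA.re_trace_sqrt]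
    exact Finset.sum_nonneg fun i _ => Real.sqrt_nonneg _
  exact (pow_le_pow_iff_left₀ (norm_nonneg _) hnonneg two_ne_zero).mp hsq

section QuantumValue

variable {X Y : Type*} [Fintype X] [Fintype Y]

/-- The set whose supremum is the quantum value `ω*(G)`. -/
def quantumBiasSet (T : X → Y → ℝ) : Set ℝ :=
  {r : ℝ | ∃ (k : ℕ) (u : X → EuclideanSpace ℝ (Fin k))
          (v : Y → EuclideanSpace ℝ (Fin k)),
          (∀ x, ‖u x‖ ≤ 1) ∧ (∀ y, ‖v y‖ ≤ 1) ∧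
          r = |∑ x, ∑ y, T x y * (inner ℝ (u x) (v y) : ℝ)|}

theorem bddAbove_quantumBiasSet (T : X → Y → ℝ) : BddAbove (quantumBiasSet T) := by
  refine ⟨∑ x, ∑ y, |T x y|, ?_⟩
  rintro _ ⟨k, u, v, hu, hv, rfl⟩
  refine (Finset.abs_sum_le_sum_abs _ _).trans (Finset.sum_le_sum fun x _ =>
    (Finset.abs_sum_le_sum_abs _ _).trans (Finset.sum_le_sum fun y _ => ?_))
  rw [abs_mul]
  refine mul_le_of_le_one_right (abs_nonneg _) ((abs_real_inner_le_norm _ _).trans ?_)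
  exact mul_le_one₀ (hu x) (norm_nonneg _) (hv y)

theorem sSup_quantumBiasSet_nonneg (T : X → Y → ℝ) : 0 ≤ sSup (quantumBiasSet T) :=
  Real.sSup_nonneg fun _ ⟨_, _, _, _, _, hr⟩ => hr ▸ abs_nonneg _

theorem abs_sum_inner_le_sSup_quantumBiasSet {E : Type*} [NormedAddCommGroup E]
    [InnerProductSpace ℝ E] [FiniteDimensional ℝ E] (T : X → Y → ℝ) {u : X → E} {v : Y → E}
    (hu : ∀ x, ‖u x‖ ≤ 1) (hv : ∀ y, ‖v y‖ ≤ 1) :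
    |∑ x, ∑ y, T x y * ⟪u x, v y⟫_ℝ| ≤ sSup (quantumBiasSet T) := by
  let e := (stdOrthonormalBasis ℝ E).repr
  refine le_csSup (bddAbove_quantumBiasSet T) ⟨_, e ∘ u, e ∘ v, by simpa using hu,
    by simpa using hv, ?_⟩
  simp only [Function.comp_apply, LinearIsometryEquiv.inner_map_map]

theorem abs_sum_inner_le_mul_sSup_quantumBiasSet {E : Type*} [NormedAddCommGroup E]
    [InnerProductSpace ℝ E] [FiniteDimensional ℝ E] (T : X → Y → ℝ) {u : X → E} {v : Y → E}
    {c : ℝ} (hc : 0 ≤ c) (hu : ∀ x, ‖u x‖ ≤ 1) (hv : ∀ y, ‖v y‖ ≤ c) :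
    |∑ x, ∑ y, T x y * ⟪u x, v y⟫_ℝ| ≤ c * sSup (quantumBiasSet T) := by
  have hv' : ∀ y, ‖c⁻¹ • v y‖ ≤ 1 := fun y => by
    rw [norm_smul, Real.norm_of_nonneg (inv_nonneg.mpr hc)]
    exact inv_mul_le_one_of_le₀ (hv y) hc
  have hcv : ∀ y, c • c⁻¹ • v y = v y := fun y => by
    rcases hc.eq_or_lt with rfl | hc
    · simpa using (norm_le_zero_iff.mp (hv y)).symm
    · exact smul_inv_smul₀ hc.ne' _
  calc |∑ x, ∑ y, T x y * ⟪u x, v y⟫_ℝ|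
      = |∑ x, ∑ y, T x y * ⟪u x, c • c⁻¹ • v y⟫_ℝ| := by simp only [hcv]
    _ = c * |∑ x, ∑ y, T x y * ⟪u x, c⁻¹ • v y⟫_ℝ| := by
        simp only [real_inner_smul_right, mul_left_comm _ c, ← Finset.mul_sum, abs_mul,
          abs_of_nonneg hc]
    _ ≤ c * sSup (quantumBiasSet T) :=
        mul_le_mul_of_nonneg_left (abs_sum_inner_le_sSup_quantumBiasSet T hu hv') hc

end QuantumValue

theorem one_way_quantum_value_le_sqrt_mul_quantum_value_general
    {X Y : Type*} [Fintype X] [Fintype Y] (n : ℕ)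
    (T : X → Y → ℝ) :
    sSup {r : ℝ | ∃ (R : X → Matrix (Fin n) (Fin n) ℂ)
        (B : Y → Matrix (Fin n) (Fin n) ℂ),
        (∀ x, (R x).IsHermitian) ∧ (∀ y, (B y).IsHermitian) ∧
        (∀ x, traceNorm (R x) ≤ 1) ∧ (∀ y, opNorm (B y) ≤ 1) ∧
        r = ‖∑ x, ∑ y, (T x y : ℂ) * (R x * B y).trace‖} ≤
    Real.sqrt n *
      sSup {r : ℝ | ∃ (k : ℕ) (u : X → EuclideanSpace ℝ (Fin k))
          (v : Y → EuclideanSpace ℝ (Fin k)),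
          (∀ x, ‖u x‖ ≤ 1) ∧ (∀ y, ‖v y‖ ≤ 1) ∧
          r = |∑ x, ∑ y, T x y * (inner ℝ (u x) (v y) : ℝ)|} := by
  refine Real.sSup_le ?_ (mul_nonneg (Real.sqrt_nonneg n) (sSup_quantumBiasSet_nonneg T))
  rintro _ ⟨R, B, hR, hB, hRtr, hBop, rfl⟩
  have hu : ∀ x, ‖WithLp.toLp 2 (R x).vec‖ ≤ 1 := fun x =>
    (norm_toLp_vec_le_traceNorm (R x)).trans (hRtr x)
  have hv : ∀ y, ‖WithLp.toLp 2 (B y).vec‖ ≤ √n := fun y =>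
    (norm_toLp_vec_le_sqrt_mul_opNorm (B y)).trans
      (mul_le_of_le_one_right (Real.sqrt_nonneg n) (hBop y))
  calc ‖∑ x, ∑ y, (T x y : ℂ) * (R x * B y).trace‖
      = |∑ x, ∑ y, T x y * ⟪WithLp.toLp 2 (R x).vec, WithLp.toLp 2 (B y).vec⟫_ℝ| := by
        simp only [(hR _).trace_mul_eq_real_inner (hB _)]
        norm_cast
    _ ≤ √n * sSup (quantumBiasSet T) :=
        abs_sum_inner_le_mul_sSup_quantumBiasSet T (Real.sqrt_nonneg n) hu hv

/-- For a XOR game with coefficients `T` (normalized so that `∑ |T_{x,y}| = 1`),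
the one-way quantum communication value with `log n` qubits,
`ω*_{o.w.-log n}(G) = sup |∑ T_{x,y} tr(R_x B_y)|` over self-adjoint n×n
matrices with `‖R_x‖_{S_1} ≤ 1`, `‖B_y‖_{op} ≤ 1`, is at most `√n` times the
quantum value `ω*(G) = sup |∑ T_{x,y} ⟨u_x, v_y⟩|` over vectors of norm at most
one in a real (Euclidean) Hilbert space. -/
theorem one_way_quantum_value_le_sqrt_mul_quantum_value
    {X Y : Type*} [Fintype X] [Fintype Y] (n : ℕ) (hn : 0 < n)
    (T : X → Y → ℝ) (hT : ∑ x, ∑ y, |T x y| = 1) :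
    sSup {r : ℝ | ∃ (R : X → Matrix (Fin n) (Fin n) ℂ)
        (B : Y → Matrix (Fin n) (Fin n) ℂ),
        (∀ x, (R x).IsHermitian) ∧ (∀ y, (B y).IsHermitian) ∧
        (∀ x, traceNorm (R x) ≤ 1) ∧ (∀ y, opNorm (B y) ≤ 1) ∧
        r = ‖∑ x, ∑ y, (T x y : ℂ) * (R x * B y).trace‖} ≤
    Real.sqrt n *
      sSup {r : ℝ | ∃ (k : ℕ) (u : X → EuclideanSpace ℝ (Fin k))
          (v : Y → EuclideanSpace ℝ (Fin k)),
          (∀ x, ‖u x‖ ≤ 1) ∧ (∀ y, ‖v y‖ ≤ 1) ∧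
          r = |∑ x, ∑ y, T x y * (inner ℝ (u x) (v y) : ℝ)|} :=
  one_way_quantum_value_le_sqrt_mul_quantum_value_general n T
end

section
/- Khintchine inequality for p = 1: for every positive integer n and all complex numbers α_1, …, α_n, (1/√2)·(∑_{i=1}^n |α_i|²)^{1/2} ≤ (1/2^n) ∑_{w ∈ {−1,1}^n} |∑_{i=1}^n α_i w_i| ≤ (∑_{i=1}^n |α_i|²)^{1/2}. -/
/-!
The upper bound is Cauchy–Schwarz together with `∑ₓ ‖∑ᵢ xᵢ αᵢ‖² = 2ⁿ ∑ᵢ ‖αᵢ‖²`.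

For the lower bound put `f x = ‖∑ᵢ xᵢ αᵢ‖` on the cube `{±1}ⁿ`, with Walsh coefficients `ĉ_A`.
Averaging the correlation `∑ₓ f x f (x δ)` over a random sign vector `δ` with `𝔼 δᵢ = ρ` gives
`2⁻ⁿ ∑_A ĉ_A² ρ^|A|`. Bounding `f x f (x δ)` below by the inner product of the two sums shows
that this is at least `ρ 2ⁿ ∑ᵢ ‖αᵢ‖²`; on the other hand `f` is even, so `ĉ_A = 0` for `|A| = 1`
and the Fourier side is at most `ĉ_∅² + ρ² (∑_A ĉ_A² - ĉ_∅²)`. With Parseval this reads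
`ρ M ≤ W + ρ² (M - W)` for `M = 4ⁿ ∑ᵢ ‖αᵢ‖²` and `W = (∑ₓ f x)²`, and letting `ρ → 1` gives
`M ≤ 2 W`.
-/

open Finset Filter Topology

namespace Khintchine

variable {ι : Type*}

noncomputable def walsh (A : Finset ι) (x : ι → ℤˣ) : ℝ :=
  ∏ i ∈ A, ((x i : ℤ) : ℝ)

lemma walsh_mul (A : Finset ι) (x y : ι → ℤˣ) : walsh A (x * y) = walsh A x * walsh A y := by
  simp only [walsh, Pi.mul_apply, Units.val_mul, Int.cast_mul, prod_mul_distrib]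

lemma walsh_one (A : Finset ι) : walsh A 1 = 1 := by
  simp [walsh]

lemma walsh_neg (A : Finset ι) (x : ι → ℤˣ) : walsh A (-x) = (-1) ^ #A * walsh A x := by
  simp [walsh, prod_neg]

@[simp] lemma walsh_empty (x : ι → ℤˣ) : walsh ∅ x = 1 := prod_empty

@[simp] lemma walsh_singleton (i : ι) (x : ι → ℤˣ) : walsh {i} x = ((x i : ℤ) : ℝ) :=
  prod_singleton _ _

section Fintype

variable [Fintype ι]

-- The law of a random sign vector whose coordinates are independent and equal to `1` with
-- probability `(1 + ρ) / 2`.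
noncomputable def noiseWeight (ρ : ℝ) (δ : ι → ℤˣ) : ℝ :=
  ∏ i, (1 + ρ * ((δ i : ℤ) : ℝ)) / 2

lemma noiseWeight_nonneg {ρ : ℝ} (hρ : |ρ| ≤ 1) (δ : ι → ℤˣ) : 0 ≤ noiseWeight ρ δ := by
  refine prod_nonneg fun i _ => div_nonneg ?_ zero_le_two
  rcases Int.units_eq_one_or (δ i) with h | h <;> simp [h] <;> linarith [abs_le.mp hρ]

lemma sum_walsh_finsets (z : ι → ℤˣ) :
    ∑ A, walsh A z = if z = 1 then 2 ^ Fintype.card ι else 0 := by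
  rw [← powerset_univ]
  simp only [walsh]
  rw [← prod_one_add]
  split_ifs with hz
  · simp [hz, one_add_one_eq_two]
  · obtain ⟨i, hi⟩ := Function.ne_iff.mp hz
    have : z i = -1 := (Int.units_eq_one_or _).resolve_left hi
    exact prod_eq_zero (mem_univ i) (by simp [this])

variable [DecidableEq ι]

lemma sum_noiseWeight_mul_walsh (ρ : ℝ) (A : Finset ι) :
    ∑ δ, noiseWeight ρ δ * walsh A δ = ρ ^ #A := by
  have hsign (i : ι) : ∑ u : ℤˣ, (1 + ρ * ((u : ℤ) : ℝ)) / 2 *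
      (if i ∈ A then ((u : ℤ) : ℝ) else 1) = if i ∈ A then ρ else 1 := by
    split_ifs <;> simp [UnitsInt.univ] <;> ring
  have hwalsh (δ : ι → ℤˣ) : walsh A δ = ∏ i, if i ∈ A then ((δ i : ℤ) : ℝ) else 1 := by
    rw [prod_ite_mem, univ_inter, walsh]
  simp_rw [noiseWeight, hwalsh, ← prod_mul_distrib]
  rw [← Fintype.prod_sum (fun i (u : ℤˣ) => (1 + ρ * ((u : ℤ) : ℝ)) / 2 *
      (if i ∈ A then ((u : ℤ) : ℝ) else 1))]
  simp_rw [hsign]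
  rw [prod_ite_mem, univ_inter, prod_const]

lemma sum_walsh (A : Finset ι) :
    ∑ x, walsh A x = if A = ∅ then 2 ^ Fintype.card ι else 0 := by
  rcases eq_or_ne A ∅ with rfl | hA
  · simp
  · have h := sum_noiseWeight_mul_walsh (0 : ℝ) A
    simp only [noiseWeight, zero_mul, add_zero, prod_const, card_univ, ← mul_sum,
      zero_pow (card_ne_zero.mpr (nonempty_iff_ne_empty.mpr hA))] at h
    simpa [hA] using h

lemma sum_coord_mul_coord (i j : ι) :
    ∑ x : ι → ℤˣ, ((x i : ℤ) : ℝ) * ((x j : ℤ) : ℝ) = if i = j then 2 ^ Fintype.card ι else 0 := by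
  rcases eq_or_ne i j with rfl | hij
  · simp [← Int.cast_mul, ← Units.val_mul, Int.units_mul_self]
  · have h := sum_walsh {i, j}
    simp only [walsh, prod_pair hij, insert_ne_empty, if_false] at h
    simp [h, hij]

noncomputable def walshCoeff (g : (ι → ℤˣ) → ℝ) (A : Finset ι) : ℝ :=
  ∑ x, g x * walsh A x

lemma sum_walshCoeff_mul_walsh (g : (ι → ℤˣ) → ℝ) (x : ι → ℤˣ) :
    ∑ A, walshCoeff g A * walsh A x = 2 ^ Fintype.card ι * g x := by
  have hx (y : ι → ℤˣ) : y * x = 1 ↔ y = x := by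
    rw [mul_eq_one_iff_eq_inv, show x⁻¹ = x from funext fun i => Int.units_inv_eq_self _]
  simp_rw [walshCoeff, sum_mul, mul_assoc, ← walsh_mul]
  rw [sum_comm]
  simp_rw [← mul_sum, sum_walsh_finsets, hx, mul_ite, mul_zero, sum_ite_eq' univ x,
    if_pos (mem_univ x), mul_comm]

lemma sum_sq_walshCoeff_mul_walsh (g : (ι → ℤˣ) → ℝ) (δ : ι → ℤˣ) :
    ∑ A, walshCoeff g A ^ 2 * walsh A δ = 2 ^ Fintype.card ι * ∑ x, g x * g (x * δ) := by
  have hA (A : Finset ι) : walshCoeff g A ^ 2 * walsh A δ =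
      ∑ x, g x * (walshCoeff g A * walsh A (x * δ)) := by
    rw [walshCoeff, sq, mul_assoc, sum_mul]
    exact sum_congr rfl fun x _ => by rw [walsh_mul]; ring
  simp_rw [hA]
  rw [sum_comm]
  simp_rw [← mul_sum, sum_walshCoeff_mul_walsh, mul_sum]
  exact sum_congr rfl fun x _ => by ring

lemma sum_sq_walshCoeff (g : (ι → ℤˣ) → ℝ) :
    ∑ A, walshCoeff g A ^ 2 = 2 ^ Fintype.card ι * ∑ x, g x ^ 2 := by
  simpa [walsh_one, sq] using sum_sq_walshCoeff_mul_walsh g 1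

lemma sum_sq_walshCoeff_mul_pow (g : (ι → ℤˣ) → ℝ) (ρ : ℝ) :
    ∑ A, walshCoeff g A ^ 2 * ρ ^ #A =
      2 ^ Fintype.card ι * ∑ δ, noiseWeight ρ δ * ∑ x, g x * g (x * δ) := by
  simp_rw [← sum_noiseWeight_mul_walsh ρ, mul_sum]
  rw [sum_comm]
  refine sum_congr rfl fun δ _ => ?_
  rw [← mul_sum, ← mul_sum, mul_left_comm, ← sum_sq_walshCoeff_mul_walsh, mul_sum]
  exact sum_congr rfl fun A _ => by ring

lemma walshCoeff_eq_zero_of_odd {g : (ι → ℤˣ) → ℝ} (hg : ∀ x, g (-x) = g x) {A : Finset ι}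
    (hA : Odd #A) : walshCoeff g A = 0 := by
  have h : walshCoeff g A = -walshCoeff g A := by
    conv_lhs => rw [walshCoeff, ← Equiv.sum_comp (Equiv.neg _)]
    simp [walshCoeff, hg, walsh_neg, hA.neg_one_pow]
  linarith

lemma sum_sq_walshCoeff_mul_pow_le {g : (ι → ℤˣ) → ℝ} (hg : ∀ x, g (-x) = g x) {ρ : ℝ}
    (h0 : 0 ≤ ρ) (h1 : ρ ≤ 1) :
    ∑ A, walshCoeff g A ^ 2 * ρ ^ #A ≤
      walshCoeff g ∅ ^ 2 + ρ ^ 2 * (∑ A, walshCoeff g A ^ 2 - walshCoeff g ∅ ^ 2) := by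
  rw [← add_sum_erase _ _ (mem_univ ∅), ← add_sum_erase _ _ (mem_univ ∅), card_empty,
    pow_zero, mul_one, add_sub_cancel_left, mul_sum]
  refine add_le_add_right (sum_le_sum fun A hA => ?_) _
  obtain ⟨hA, -⟩ := mem_erase.mp hA
  rcases (one_le_card.mpr (nonempty_iff_ne_empty.mpr hA)).eq_or_lt with h | h
  · simp [walshCoeff_eq_zero_of_odd hg (h ▸ odd_one)]
  · rw [mul_comm]
    exact mul_le_mul_of_nonneg_right (pow_le_pow_of_le_one h0 h1 h) (sq_nonneg _)

end Fintype

lemma le_two_mul_of_forall_lt_one {M W : ℝ}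
    (h : ∀ ρ : ℝ, 0 < ρ → ρ < 1 → ρ * M ≤ W + ρ ^ 2 * (M - W)) : M ≤ 2 * W := by
  have hlim : Tendsto (fun ρ : ℝ => ρ * M - (1 + ρ) * W) (𝓝[<] 1) (𝓝 (M - 2 * W)) := by
    have hcont : Continuous fun ρ : ℝ => ρ * M - (1 + ρ) * W := by fun_prop
    convert (hcont.tendsto 1).mono_left nhdsWithin_le_nhds using 2
    ring
  refine sub_nonpos.mp (le_of_tendsto hlim ?_)
  filter_upwards [Ioo_mem_nhdsLT (zero_lt_one' ℝ)] with ρ ⟨h0, h1⟩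
  -- `W + ρ²(M - W) - ρM = (1 - ρ)((1 + ρ)W - ρM)`
  nlinarith [h ρ h0 h1]

section InnerProductSpace

variable [Fintype ι] {E : Type*} [NormedAddCommGroup E] [InnerProductSpace ℝ E]

noncomputable def signSum (v : ι → E) (x : ι → ℤˣ) : E :=
  ∑ i, ((x i : ℤ) : ℝ) • v i

lemma signSum_neg (v : ι → E) (x : ι → ℤˣ) : signSum v (-x) = -signSum v x := by
  simp [signSum]

variable [DecidableEq ι]

lemma sum_inner_signSum_signSum_mul (v : ι → E) (δ : ι → ℤˣ) :
    ∑ x, inner ℝ (signSum v x) (signSum v (x * δ)) =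
      2 ^ Fintype.card ι * ∑ i, ((δ i : ℤ) : ℝ) * ‖v i‖ ^ 2 := by
  have hx (x : ι → ℤˣ) : inner ℝ (signSum v x) (signSum v (x * δ)) =
      ∑ i, ∑ j, ((x i : ℤ) : ℝ) * ((x j : ℤ) : ℝ) * (((δ i : ℤ) : ℝ) * inner ℝ (v j) (v i)) := by
    simp only [signSum, sum_inner, inner_sum, real_inner_smul_left, real_inner_smul_right,
      Pi.mul_apply, Units.val_mul, Int.cast_mul]
    exact sum_congr rfl fun i _ => sum_congr rfl fun j _ => by ring
  simp_rw [hx]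
  rw [sum_comm]
  simp_rw [sum_comm (s := univ (α := ι → ℤˣ)), ← sum_mul, sum_coord_mul_coord, ite_mul, zero_mul,
    sum_ite_eq, mem_univ, if_true, real_inner_self_eq_norm_sq, mul_sum]

lemma sum_norm_signSum_sq (v : ι → E) :
    ∑ x, ‖signSum v x‖ ^ 2 = 2 ^ Fintype.card ι * ∑ i, ‖v i‖ ^ 2 := by
  simpa [real_inner_self_eq_norm_sq] using sum_inner_signSum_signSum_mul v 1

lemma mul_sum_le_sum_norm_signSum_mul_norm_signSum (v : ι → E) (δ : ι → ℤˣ) :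
    2 ^ Fintype.card ι * ∑ i, ((δ i : ℤ) : ℝ) * ‖v i‖ ^ 2 ≤
      ∑ x, ‖signSum v x‖ * ‖signSum v (x * δ)‖ := by
  rw [← sum_inner_signSum_signSum_mul]
  exact sum_le_sum fun x _ => real_inner_le_norm _ _

lemma mul_sum_norm_sq_le_sum_sq_walshCoeff_mul_pow (v : ι → E) {ρ : ℝ} (hρ : |ρ| ≤ 1) :
    ρ * (2 ^ Fintype.card ι * (2 ^ Fintype.card ι * ∑ i, ‖v i‖ ^ 2)) ≤
      ∑ A, walshCoeff (‖signSum v ·‖) A ^ 2 * ρ ^ #A := by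
  have hcoord (i : ι) : ∑ δ, noiseWeight ρ δ * ((δ i : ℤ) : ℝ) = ρ := by
    simpa using sum_noiseWeight_mul_walsh ρ {i}
  rw [sum_sq_walshCoeff_mul_pow]
  calc ρ * (2 ^ Fintype.card ι * (2 ^ Fintype.card ι * ∑ i, ‖v i‖ ^ 2))
      = 2 ^ Fintype.card ι * ∑ i, (∑ δ, noiseWeight ρ δ * ((δ i : ℤ) : ℝ)) *
          (2 ^ Fintype.card ι * ‖v i‖ ^ 2) := by
        simp_rw [hcoord, ← mul_sum]
        ring
    _ = 2 ^ Fintype.card ι * ∑ δ, noiseWeight ρ δ *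
          (2 ^ Fintype.card ι * ∑ i, ((δ i : ℤ) : ℝ) * ‖v i‖ ^ 2) := by
        simp_rw [sum_mul, mul_sum]
        rw [sum_comm]
        exact sum_congr rfl fun δ _ => sum_congr rfl fun i _ => by ring
    _ ≤ _ := by
        gcongr with δ
        · exact noiseWeight_nonneg hρ δ
        · exact mul_sum_le_sum_norm_signSum_mul_norm_signSum v δ

lemma sq_sum_norm_signSum_le (v : ι → E) :
    (∑ x, ‖signSum v x‖) ^ 2 ≤ 2 ^ Fintype.card ι * (2 ^ Fintype.card ι * ∑ i, ‖v i‖ ^ 2) := by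
  simpa [sum_norm_signSum_sq] using sq_sum_le_card_mul_sum_sq (s := univ) (f := (‖signSum v ·‖))

lemma le_two_mul_sq_sum_norm_signSum (v : ι → E) :
    2 ^ Fintype.card ι * (2 ^ Fintype.card ι * ∑ i, ‖v i‖ ^ 2) ≤
      2 * (∑ x, ‖signSum v x‖) ^ 2 := by
  have heven (x : ι → ℤˣ) : ‖signSum v (-x)‖ = ‖signSum v x‖ := by rw [signSum_neg, norm_neg]
  have hW : walshCoeff (‖signSum v ·‖) ∅ = ∑ x, ‖signSum v x‖ := by simp [walshCoeff]
  have hM : ∑ A, walshCoeff (‖signSum v ·‖) A ^ 2 =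
      2 ^ Fintype.card ι * (2 ^ Fintype.card ι * ∑ i, ‖v i‖ ^ 2) := by
    rw [sum_sq_walshCoeff, sum_norm_signSum_sq]
  rw [← hW, ← hM]
  refine le_two_mul_of_forall_lt_one fun ρ h0 h1 => ?_
  calc ρ * ∑ A, walshCoeff (‖signSum v ·‖) A ^ 2
      ≤ ∑ A, walshCoeff (‖signSum v ·‖) A ^ 2 * ρ ^ #A := by
        rw [hM]
        exact mul_sum_norm_sq_le_sum_sq_walshCoeff_mul_pow v (abs_le.mpr ⟨by linarith, h1.le⟩)
    _ ≤ _ := sum_sq_walshCoeff_mul_pow_le heven h0.le h1.le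

end InnerProductSpace

end Khintchine

open Khintchine in
/-- Khintchine inequality for `p = 1`: for all complex numbers `α_1, …, α_n`,
`(1/√2) (∑ |α_i|²)^{1/2} ≤ 2^{-n} ∑_{w ∈ {−1,1}ⁿ} |∑ α_i w_i| ≤ (∑ |α_i|²)^{1/2}`. -/
theorem khintchine_one (n : ℕ) (α : Fin n → ℂ) :
    (1 / Real.sqrt 2) * Real.sqrt (∑ i, ‖α i‖ ^ 2) ≤
      (1 / 2 ^ n) * ∑ w : Fin n → ℤˣ,
        ‖∑ i, α i * (((w i : ℤ) : ℝ) : ℂ)‖ ∧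
    (1 / 2 ^ n) * (∑ w : Fin n → ℤˣ,
        ‖∑ i, α i * (((w i : ℤ) : ℝ) : ℂ)‖) ≤
      Real.sqrt (∑ i, ‖α i‖ ^ 2) := by
  have hS (w : Fin n → ℤˣ) : ∑ i, α i * (((w i : ℤ) : ℝ) : ℂ) = signSum α w := by
    simp only [signSum, Complex.real_smul, mul_comm]
  have hlower := le_two_mul_sq_sum_norm_signSum α
  have hupper := sq_sum_norm_signSum_le α
  simp only [Fintype.card_fin] at hlower hupper
  simp_rw [hS]
  set T := ∑ w, ‖signSum α w‖
  set σ := ∑ i, ‖α i‖ ^ 2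
  have hσ : 0 ≤ σ := sum_nonneg fun i _ => sq_nonneg _
  constructor
  · refine le_of_pow_le_pow_left₀ two_ne_zero (by positivity) ?_
    rw [mul_pow, mul_pow, div_pow, div_pow, Real.sq_sqrt zero_le_two, Real.sq_sqrt hσ,
      div_mul_eq_mul_div, div_mul_eq_mul_div, div_le_div_iff₀ zero_lt_two (by positivity)]
    nlinarith
  · rw [Real.le_sqrt (by positivity) hσ, mul_pow, div_pow, div_mul_eq_mul_div,
      div_le_iff₀ (by positivity)]
    nlinarith
end

section
/- Transposed double Khintchine inequality: let 1 < p < ∞ with 1/p + 1/p' = 1 and let b_{p'} be the upper Khintchine constant for p'. Then for every family of real numbers (α(x,z))_{(x,z) ∈ {−1,1}^n × {−1,1}^n}, ( ∑_{i,j=1}^n ( ∑_{x,z} x_i z_j α(x,z) )² )^{1/2} ≤ b_{p'}² · (2^{2n})^{1/p'} · ( ∑_{x,z} |α(x,z)|^p )^{1/p}. -/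
/-!
Put `S i j = ∑_{x,z} x_i z_j α(x,z)` and `F(x,z) = ∑_{i,j} S i j x_i z_j`. Then
`∑ S i j ^ 2 = ∑_{x,z} α(x,z) F(x,z) ≤ ‖α‖_p ‖F‖_{p'}` by Hölder, and the double Khintchine
inequality gives `‖F‖_{p'} ≤ b² 2^{2n/p'} (∑ S i j ^ 2)^{1/2}`: apply Khintchine in `x` for
fixed `z`, then bound `∑_z ‖(∑_j S i j z_j)_i‖₂^{p'}` by Minkowski in `L^{p'/2}` and Khintchine
in `z` if `p' ≥ 2`, or by concavity of `t ↦ t^{p'/2}` and orthogonality of the `z_j` if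
`p' ≤ 2` (where `b ≥ 1` absorbs the constant). Dividing by `(∑ S i j ^ 2)^{1/2}` concludes.
-/

open Finset

theorem Lp_sum_le_sum_Lp_of_nonneg {ι κ : Type*} [Fintype κ] (s : Finset ι) (g : ι → κ → ℝ)
    (hg : ∀ i k, 0 ≤ g i k) {r : ℝ} (hr : 1 ≤ r) :
    (∑ k, (∑ i ∈ s, g i k) ^ r) ^ (1 / r) ≤ ∑ i ∈ s, (∑ k, g i k ^ r) ^ (1 / r) := by
  classical
  induction s using Finset.induction with
  | empty =>
    simp [Real.zero_rpow (by positivity : r ≠ 0), Real.zero_rpow (by positivity : r⁻¹ ≠ 0)]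
  | insert a s has ih =>
    simp only [sum_insert has]
    exact (Real.Lp_add_le_of_nonneg univ hr (fun k _ => hg a k)
      (fun k _ => sum_nonneg fun i _ => hg i k)).trans (add_le_add_right ih _)

theorem sum_rpow_le_card_rpow_mul_rpow_sum {κ : Type*} [Fintype κ] (f : κ → ℝ)
    (hf : ∀ k, 0 ≤ f k) {r : ℝ} (hr₀ : 0 < r) (hr₁ : r ≤ 1) :
    ∑ k, f k ^ r ≤ (Fintype.card κ : ℝ) ^ (1 - r) * (∑ k, f k) ^ r := by
  have := Real.inner_le_weight_mul_Lp_of_nonneg univ (one_le_inv_iff₀.mpr ⟨hr₀, hr₁⟩)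
    (fun _ => 1) (fun k => f k ^ r) (fun _ => zero_le_one) (fun k => Real.rpow_nonneg (hf k) r)
  simpa [← Real.rpow_mul (hf _), hr₀.ne'] using this

theorem sqrt_le_of_le_mul_sqrt {x c : ℝ} (hc : 0 ≤ c) (h : x ≤ c * √x) : √x ≤ c := by
  rcases le_total x 0 with hx | hx
  · rwa [Real.sqrt_eq_zero'.mpr hx]
  · nlinarith [Real.mul_self_sqrt hx, Real.sqrt_nonneg x]

section SignVectors

variable {ι : Type*} [Fintype ι] [DecidableEq ι]

theorem sum_sign_mul_sign (j k : ι) :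
    ∑ z : ι → ℤˣ, ((z j : ℤ) : ℝ) * ((z k : ℤ) : ℝ) =
      if j = k then 2 ^ Fintype.card ι else 0 := by
  split_ifs with hjk
  · subst hjk
    simp [← Int.cast_mul, ← Units.val_mul]
  · -- multiplying by the sign vector that flips coordinate `j` negates every summand
    set e : ι → ℤˣ := Function.update 1 j (-1)
    have hflip : ∀ z : ι → ℤˣ, ((((e * z) j : ℤˣ) : ℤ) : ℝ) * (((e * z) k : ℤ) : ℝ) =
        -(((z j : ℤ) : ℝ) * ((z k : ℤ) : ℝ)) := by
      intro z
      simp [e, Function.update_of_ne (Ne.symm hjk)]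
    have := Equiv.sum_comp (Equiv.mulLeft e) fun z => ((z j : ℤ) : ℝ) * ((z k : ℤ) : ℝ)
    simp only [Equiv.coe_mulLeft, hflip, sum_neg_distrib] at this
    linarith

theorem sum_sq_sum_mul_sign (a : ι → ℝ) :
    ∑ z : ι → ℤˣ, (∑ j, a j * ((z j : ℤ) : ℝ)) ^ 2 = 2 ^ Fintype.card ι * ∑ j, a j ^ 2 := by
  calc ∑ z : ι → ℤˣ, (∑ j, a j * ((z j : ℤ) : ℝ)) ^ 2
      = ∑ j, ∑ k, a j * a k * ∑ z : ι → ℤˣ, ((z j : ℤ) : ℝ) * ((z k : ℤ) : ℝ) := by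
        simp only [sq, sum_mul_sum]
        simp only [mul_sum]
        rw [sum_comm]
        refine sum_congr rfl fun j _ => ?_
        rw [sum_comm]
        exact sum_congr rfl fun k _ => sum_congr rfl fun z _ => by ring
    _ = 2 ^ Fintype.card ι * ∑ j, a j ^ 2 := by
        simp [sum_sign_mul_sign, mul_sum, sq, mul_comm]

theorem sum_sqrt_sum_sq_rpow_le_of_le_two {κ : Type*} [Fintype κ] (S : κ → ι → ℝ) {q : ℝ}
    (hq₀ : 0 < q) (hq₂ : q ≤ 2) :
    ∑ z : ι → ℤˣ, √(∑ i, (∑ j, S i j * ((z j : ℤ) : ℝ)) ^ 2) ^ q ≤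
      2 ^ Fintype.card ι * √(∑ i, ∑ j, S i j ^ 2) ^ q := by
  have hparseval : ∑ z : ι → ℤˣ, ∑ i, (∑ j, S i j * ((z j : ℤ) : ℝ)) ^ 2 =
      2 ^ Fintype.card ι * ∑ i, ∑ j, S i j ^ 2 := by
    rw [sum_comm, mul_sum]
    exact sum_congr rfl fun i _ => sum_sq_sum_mul_sign (S i)
  have hjensen := sum_rpow_le_card_rpow_mul_rpow_sum
    (fun z : ι → ℤˣ => ∑ i, (∑ j, S i j * ((z j : ℤ) : ℝ)) ^ 2)
    (fun _ => sum_nonneg fun _ _ => sq_nonneg _) (half_pos hq₀) (by linarith)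
  have hT : 0 ≤ ∑ i, ∑ j, S i j ^ 2 := by positivity
  have hcard : (Fintype.card (ι → ℤˣ) : ℝ) = 2 ^ Fintype.card ι := by simp
  simp only [← Real.rpow_div_two_eq_sqrt _ hT,
    ← Real.rpow_div_two_eq_sqrt _ (sum_nonneg fun _ _ => sq_nonneg _)]
  calc _ ≤ _ := hjensen
    _ = 2 ^ Fintype.card ι * (∑ i, ∑ j, S i j ^ 2) ^ (q / 2) := by
      rw [hparseval, Real.mul_rpow (by positivity) hT, ← mul_assoc, hcard,
        ← Real.rpow_add (by positivity), sub_add_cancel, Real.rpow_one]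

end SignVectors

theorem sum_sum_mul_sum_sum_comm {ι κ X Z : Type*} [Fintype ι] [Fintype κ] [Fintype X]
    [Fintype Z] (S : ι → κ → ℝ) (u : X → ι → ℝ) (v : Z → κ → ℝ) (α : X → Z → ℝ) :
    ∑ i, ∑ j, S i j * ∑ x, ∑ z, u x i * v z j * α x z =
      ∑ x, ∑ z, α x z * ∑ i, (∑ j, S i j * v z j) * u x i := by
  simp only [mul_sum, sum_mul]
  simp_rw [sum_comm (s := (univ : Finset κ)) (t := (univ : Finset X))]
  rw [sum_comm]
  simp_rw [sum_comm (s := (univ : Finset κ)) (t := (univ : Finset Z)),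
    sum_comm (s := (univ : Finset ι)) (t := (univ : Finset Z))]
  exact sum_congr rfl fun x _ => sum_congr rfl fun z _ => sum_congr rfl fun i _ =>
    sum_congr rfl fun j _ => by ring

def IsUpperKhintchineConst (q b : ℝ) : Prop :=
  ∀ (m : ℕ) (β : Fin m → ℝ),
    (1 / 2 ^ m * ∑ w : Fin m → ℤˣ, |∑ i, β i * ((w i : ℤ) : ℝ)| ^ q) ^ (1 / q) ≤
      b * √(∑ i, β i ^ 2)

namespace IsUpperKhintchineConst

variable {q b : ℝ}

theorem of_complex
    (h : ∀ (m : ℕ) (β : Fin m → ℂ),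
      ((1 / 2 ^ m) * ∑ w : Fin m → ℤˣ, ‖∑ i, β i * (((w i : ℤ) : ℝ) : ℂ)‖ ^ q) ^ (1 / q) ≤
        b * √(∑ i, ‖β i‖ ^ 2)) :
    IsUpperKhintchineConst q b := by
  intro m β
  have hnorm : ∀ w : Fin m → ℤˣ, ‖∑ i, (β i : ℂ) * (((w i : ℤ) : ℝ) : ℂ)‖ =
      |∑ i, β i * ((w i : ℤ) : ℝ)| := fun w => by
    rw [← Real.norm_eq_abs, ← Complex.norm_real]
    push_cast
    rfl
  simpa only [hnorm, Complex.norm_real, Real.norm_eq_abs, sq_abs] using h m fun i => (β i : ℂ)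

theorem one_le (h : IsUpperKhintchineConst q b) : 1 ≤ b := by
  have habs : ∀ u : ℤˣ, |((u : ℤ) : ℝ)| = 1 := fun u => by
    rw [← Int.cast_abs, Int.isUnit_iff_abs_eq.mp u.isUnit, Int.cast_one]
  simpa [habs] using h 1 fun _ => 1

theorem sum_rpow_le (h : IsUpperKhintchineConst q b) (hq : 0 < q) (m : ℕ) (β : Fin m → ℝ) :
    ∑ w : Fin m → ℤˣ, |∑ i, β i * ((w i : ℤ) : ℝ)| ^ q ≤ 2 ^ m * (b * √(∑ i, β i ^ 2)) ^ q := by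
  have hb : 0 ≤ b := zero_le_one.trans h.one_le
  have h2m : (0 : ℝ) < 2 ^ m := by positivity
  have hsum : 0 ≤ ∑ w : Fin m → ℤˣ, |∑ i, β i * ((w i : ℤ) : ℝ)| ^ q := by positivity
  have := Real.rpow_le_rpow (by positivity) (h m β) hq.le
  rw [← Real.rpow_mul (by positivity), one_div_mul_cancel hq.ne', Real.rpow_one] at this
  rwa [one_div, inv_mul_le_iff₀ h2m] at this

theorem sum_sqrt_sum_sq_rpow_le_of_two_le (h : IsUpperKhintchineConst q b) (hq : 2 ≤ q)
    {κ : Type*} [Fintype κ] {n : ℕ} (S : κ → Fin n → ℝ) :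
    ∑ z : Fin n → ℤˣ, √(∑ i, (∑ j, S i j * ((z j : ℤ) : ℝ)) ^ 2) ^ q ≤
      2 ^ n * (b * √(∑ i, ∑ j, S i j ^ 2)) ^ q := by
  set r := q / 2 with hr_def
  have hr : 1 ≤ r := by linarith
  have hr₀ : 0 < r := by linarith
  have hb : 0 ≤ b := zero_le_one.trans h.one_le
  have hcancel : ∀ a y : ℝ, 0 ≤ a → 0 ≤ y → (a ^ r⁻¹ * y ^ 2) ^ r = a * y ^ q := by
    intro a y ha hy
    rw [Real.mul_rpow (by positivity) (by positivity), Real.rpow_inv_rpow ha hr₀.ne',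
      ← Real.rpow_natCast, ← Real.rpow_mul hy, hr_def,
      show ((2 : ℕ) : ℝ) * (q / 2) = q by push_cast; ring]
  have hrow : ∀ i, (∑ z : Fin n → ℤˣ, ((∑ j, S i j * ((z j : ℤ) : ℝ)) ^ 2) ^ r) ^ r⁻¹ ≤
      ((2 : ℝ) ^ n) ^ r⁻¹ * (b * √(∑ j, S i j ^ 2)) ^ 2 := by
    intro i
    rw [Real.rpow_inv_le_iff_of_pos (by positivity) (by positivity) hr₀,
      hcancel _ _ (by positivity) (by positivity)]
    simpa only [hr_def, Real.rpow_div_two_eq_sqrt _ (sq_nonneg _), Real.sqrt_sq_eq_abs] using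
      h.sum_rpow_le (by linarith) n (S i)
  have hminkowski := Lp_sum_le_sum_Lp_of_nonneg univ
    (fun i (z : Fin n → ℤˣ) => (∑ j, S i j * ((z j : ℤ) : ℝ)) ^ 2) (fun _ _ => sq_nonneg _) hr
  simp only [one_div] at hminkowski
  simp only [← Real.rpow_div_two_eq_sqrt _ (sum_nonneg fun _ _ => sq_nonneg _), ← hr_def]
  rw [← hcancel _ _ (by positivity) (by positivity),
    ← Real.rpow_inv_le_iff_of_pos (by positivity) (by positivity) hr₀]
  calc _ ≤ _ := hminkowski
    _ ≤ ∑ i, ((2 : ℝ) ^ n) ^ r⁻¹ * (b * √(∑ j, S i j ^ 2)) ^ 2 := sum_le_sum fun i _ => hrow i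
    _ = ((2 : ℝ) ^ n) ^ r⁻¹ * (b * √(∑ i, ∑ j, S i j ^ 2)) ^ 2 := by
      simp only [mul_pow, Real.sq_sqrt (sum_nonneg fun _ _ => sq_nonneg _), ← mul_sum,
        Real.sq_sqrt (sum_nonneg fun _ _ => sum_nonneg fun _ _ => sq_nonneg _)]

theorem sum_sqrt_sum_sq_rpow_le (h : IsUpperKhintchineConst q b) (hq : 0 < q)
    {κ : Type*} [Fintype κ] {n : ℕ} (S : κ → Fin n → ℝ) :
    ∑ z : Fin n → ℤˣ, √(∑ i, (∑ j, S i j * ((z j : ℤ) : ℝ)) ^ 2) ^ q ≤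
      2 ^ n * (b * √(∑ i, ∑ j, S i j ^ 2)) ^ q := by
  rcases le_total q 2 with hq₂ | hq₂
  · have hb : 1 ≤ b ^ q := Real.one_le_rpow h.one_le hq.le
    calc _ ≤ 2 ^ Fintype.card (Fin n) * √(∑ i, ∑ j, S i j ^ 2) ^ q :=
          sum_sqrt_sum_sq_rpow_le_of_le_two S hq hq₂
      _ ≤ 2 ^ n * (b * √(∑ i, ∑ j, S i j ^ 2)) ^ q := by
        rw [Fintype.card_fin, Real.mul_rpow (by linarith [h.one_le]) (Real.sqrt_nonneg _)]
        gcongr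
        exact le_mul_of_one_le_left (by positivity) hb
  · exact h.sum_sqrt_sum_sq_rpow_le_of_two_le hq₂ S

theorem sum_sum_rpow_bilinear_le (h : IsUpperKhintchineConst q b) (hq : 0 < q) {m n : ℕ}
    (S : Fin m → Fin n → ℝ) :
    ∑ x : Fin m → ℤˣ, ∑ z : Fin n → ℤˣ,
        |∑ i, (∑ j, S i j * ((z j : ℤ) : ℝ)) * ((x i : ℤ) : ℝ)| ^ q ≤
      2 ^ (m + n) * (b ^ 2 * √(∑ i, ∑ j, S i j ^ 2)) ^ q := by
  have hb : 0 ≤ b := zero_le_one.trans h.one_le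
  calc _ = ∑ z : Fin n → ℤˣ, ∑ x : Fin m → ℤˣ,
        |∑ i, (∑ j, S i j * ((z j : ℤ) : ℝ)) * ((x i : ℤ) : ℝ)| ^ q := sum_comm
    _ ≤ ∑ z : Fin n → ℤˣ, 2 ^ m * (b * √(∑ i, (∑ j, S i j * ((z j : ℤ) : ℝ)) ^ 2)) ^ q :=
        sum_le_sum fun z _ => h.sum_rpow_le hq m _
    _ = 2 ^ m * b ^ q * ∑ z : Fin n → ℤˣ, √(∑ i, (∑ j, S i j * ((z j : ℤ) : ℝ)) ^ 2) ^ q := by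
        simp only [Real.mul_rpow hb (Real.sqrt_nonneg _), mul_sum, mul_assoc]
    _ ≤ 2 ^ m * b ^ q * (2 ^ n * (b * √(∑ i, ∑ j, S i j ^ 2)) ^ q) := by
        gcongr
        exact h.sum_sqrt_sum_sq_rpow_le hq S
    _ = 2 ^ (m + n) * (b ^ 2 * √(∑ i, ∑ j, S i j ^ 2)) ^ q := by
        have hb2 : (b ^ 2) ^ q = b ^ q * b ^ q := by rw [sq, Real.mul_rpow hb hb]
        rw [Real.mul_rpow hb (Real.sqrt_nonneg _),
          Real.mul_rpow (sq_nonneg b) (Real.sqrt_nonneg _), hb2, pow_add]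
        ring

theorem Lp_bilinear_le (h : IsUpperKhintchineConst q b) (hq : 0 < q) {m n : ℕ}
    (S : Fin m → Fin n → ℝ) :
    (∑ x : Fin m → ℤˣ, ∑ z : Fin n → ℤˣ,
        |∑ i, (∑ j, S i j * ((z j : ℤ) : ℝ)) * ((x i : ℤ) : ℝ)| ^ q) ^ (1 / q) ≤
      ((2 : ℝ) ^ (m + n)) ^ (1 / q) * (b ^ 2 * √(∑ i, ∑ j, S i j ^ 2)) := by
  have hb : 0 ≤ b := zero_le_one.trans h.one_le
  calc _ ≤ ((2 : ℝ) ^ (m + n) * (b ^ 2 * √(∑ i, ∑ j, S i j ^ 2)) ^ q) ^ (1 / q) :=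
        Real.rpow_le_rpow (by positivity) (h.sum_sum_rpow_bilinear_le hq S)
          (one_div_pos.mpr hq).le
    _ = _ := by
        rw [Real.mul_rpow (by positivity) (by positivity), one_div,
          Real.rpow_rpow_inv (by positivity) hq.ne']

end IsUpperKhintchineConst

theorem transposed_double_khintchine_general (n : ℕ) (p p' b : ℝ)
    (hp : 1 < p) (hpp' : 1 / p + 1 / p' = 1)
    (hKhintchine : ∀ (m : ℕ) (β : Fin m → ℂ),
      ((1 / 2 ^ m) * ∑ w : Fin m → ℤˣ,
          ‖∑ i, β i * (((w i : ℤ) : ℝ) : ℂ)‖ ^ p') ^ (1 / p') ≤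
        b * Real.sqrt (∑ i, ‖β i‖ ^ 2))
    (α : (Fin n → ℤˣ) → (Fin n → ℤˣ) → ℝ) :
    Real.sqrt (∑ i, ∑ j,
        (∑ x : Fin n → ℤˣ, ∑ z : Fin n → ℤˣ,
          ((x i : ℤ) : ℝ) * ((z j : ℤ) : ℝ) * α x z) ^ 2) ≤
      b ^ 2 * ((2 : ℝ) ^ (2 * n)) ^ (1 / p') *
        (∑ x : Fin n → ℤˣ, ∑ z : Fin n → ℤˣ, |α x z| ^ p) ^ (1 / p) := by
  have hK := IsUpperKhintchineConst.of_complex hKhintchine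
  have hpq : p.HolderConjugate p' :=
    Real.holderConjugate_iff.mpr ⟨hp, by simpa only [one_div] using hpp'⟩
  obtain ⟨S, hS⟩ : ∃ S : Fin n → Fin n → ℝ, ∀ i j,
      ∑ x : Fin n → ℤˣ, ∑ z : Fin n → ℤˣ, ((x i : ℤ) : ℝ) * ((z j : ℤ) : ℝ) * α x z = S i j :=
    ⟨_, fun _ _ => rfl⟩
  simp only [hS]
  set F : (Fin n → ℤˣ) → (Fin n → ℤˣ) → ℝ := fun x z =>
    ∑ i, (∑ j, S i j * ((z j : ℤ) : ℝ)) * ((x i : ℤ) : ℝ)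
  have hduality : ∑ i, ∑ j, S i j ^ 2 = ∑ x, ∑ z, α x z * F x z := by
    simpa only [hS, sq] using sum_sum_mul_sum_sum_comm S (fun x i => ((x i : ℤ) : ℝ))
      (fun z j => ((z j : ℤ) : ℝ)) α
  have hholder : ∑ i, ∑ j, S i j ^ 2 ≤
      (∑ x, ∑ z, |α x z| ^ p) ^ (1 / p) * (∑ x, ∑ z, |F x z| ^ p') ^ (1 / p') := by
    simpa only [hduality, Fintype.sum_prod_type] using Real.inner_le_Lp_mul_Lq univ
      (fun y : (Fin n → ℤˣ) × (Fin n → ℤˣ) => α y.1 y.2) (fun y => F y.1 y.2) hpq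
  have hF := hK.Lp_bilinear_le hpq.symm.pos S
  rw [← two_mul] at hF
  refine sqrt_le_of_le_mul_sqrt (by positivity) ?_
  calc _ ≤ _ := hholder
    _ ≤ (∑ x, ∑ z, |α x z| ^ p) ^ (1 / p) *
          (((2 : ℝ) ^ (2 * n)) ^ (1 / p') * (b ^ 2 * √(∑ i, ∑ j, S i j ^ 2))) := by gcongr
    _ = _ := by ring

/-- Transposed double Khintchine inequality: let `1 < p < ∞` with
`1/p + 1/p' = 1` and let `b` be an upper Khintchine constant for `p'`
(i.e. `(2^{-m} ∑_w |∑ β_i w_i|^{p'})^{1/p'} ≤ b (∑ |β_i|²)^{1/2}` for all `m, β`).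
Then for every family of reals `(α(x,z))` indexed by `{−1,1}ⁿ × {−1,1}ⁿ`,
`(∑_{i,j} (∑_{x,z} x_i z_j α(x,z))²)^{1/2}
   ≤ b² (2^{2n})^{1/p'} (∑_{x,z} |α(x,z)|^p)^{1/p}`. -/
theorem transposed_double_khintchine (n : ℕ) (p p' b : ℝ)
    (hp : 1 < p) (hpp' : 1 / p + 1 / p' = 1) (hb : 1 ≤ b)
    (hKhintchine : ∀ (m : ℕ) (β : Fin m → ℂ),
      ((1 / 2 ^ m) * ∑ w : Fin m → ℤˣ,
          ‖∑ i, β i * (((w i : ℤ) : ℝ) : ℂ)‖ ^ p') ^ (1 / p') ≤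
        b * Real.sqrt (∑ i, ‖β i‖ ^ 2))
    (α : (Fin n → ℤˣ) → (Fin n → ℤˣ) → ℝ) :
    Real.sqrt (∑ i, ∑ j,
        (∑ x : Fin n → ℤˣ, ∑ z : Fin n → ℤˣ,
          ((x i : ℤ) : ℝ) * ((z j : ℤ) : ℝ) * α x z) ^ 2) ≤
      b ^ 2 * ((2 : ℝ) ^ (2 * n)) ^ (1 / p') *
        (∑ x : Fin n → ℤˣ, ∑ z : Fin n → ℤˣ, |α x z| ^ p) ^ (1 / p) :=
  transposed_double_khintchine_general n p p' b hp hpp' hKhintchine α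
end
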